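/- arXiv:2102.00100 — 3 statements merged into one kernel-verified Lean document; each statement's English description precedes it below -/
import Mathlib

section
/- Let H be a real Hilbert space, let g : [0,∞) → [0,∞) be nonincreasing, and let f : [0,∞) → H be strongly measurable and locally Bochner integrable with ∫₀^∞ g(τ) ‖f(τ)‖² dτ < ∞. Then ∫₀^∞ g(s) ‖∫₀^s e^{τ−s} f(τ) dτ‖² ds ≤ ∫₀^∞ g(τ) ‖f(τ)‖² dτ. -/
open MeasureTheory Set Real
open scoped ENNReal

/-!
Pointwise, `‖∫₀ˢ e^{τ-s} f τ dτ‖² ≤ ∫₀ˢ e^{τ-s} ‖f τ‖² dτ` by Cauchy–Schwarz, because the kernel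
`e^{τ-s}` has mass at most one on `(0, s]`; since `g` is nonincreasing, `g s` may be moved inside as
`g τ`. Integrating in `s` and exchanging the order of integration, the kernel contributes
`∫_τ^∞ e^{τ-s} ds = 1`. Everything is estimated in `ℝ≥0∞`, so no integrability of the left-hand
integrand is needed: if it fails, its Bochner integral is `0`.
-/

theorem lintegral_exp_sub_Iic (s : ℝ) : ∫⁻ τ in Iic s, ENNReal.ofReal (exp (τ - s)) = 1 := by
  simp_rw [exp_sub]
  rw [← ofReal_integral_eq_lintegral_ofReal ((integrableOn_exp_Iic s).div_const _)
      (.of_forall fun τ => by positivity), integral_div, integral_exp_Iic,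
    div_self (exp_pos s).ne', ENNReal.ofReal_one]

theorem lintegral_exp_sub_Ici (τ : ℝ) : ∫⁻ s in Ici τ, ENNReal.ofReal (exp (τ - s)) = 1 := by
  have hsplit : ∀ s, exp (τ - s) = exp τ * exp (-s) := fun s => by
    rw [← exp_add, sub_eq_add_neg]
  simp_rw [hsplit]
  rw [← restrict_Ioi_eq_restrict_Ici, ← ofReal_integral_eq_lintegral_ofReal
      ((integrableOn_exp_neg_Ioi τ).const_mul _) (.of_forall fun s => by positivity),
    integral_const_mul, integral_exp_neg_Ioi, ← exp_add, add_neg_cancel, exp_zero,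
    ENNReal.ofReal_one]

theorem ENNReal.lintegral_mul_sq_le {α : Type*} [MeasurableSpace α] {μ : Measure α}
    {w h : α → ℝ≥0∞} (hw : AEMeasurable w μ) (hh : AEMeasurable h μ)
    (hw_one : ∫⁻ a, w a ∂μ ≤ 1) :
    (∫⁻ a, w a * h a ∂μ) ^ 2 ≤ ∫⁻ a, w a * h a ^ 2 ∂μ := by
  have hsqrt : ∀ a, w a * h a = w a ^ (2⁻¹ : ℝ) * (w a * h a ^ 2) ^ (2⁻¹ : ℝ) := fun a => by
    rw [← ENNReal.mul_rpow_of_nonneg _ _ (by norm_num), ← mul_assoc, ← sq, ← mul_pow]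
    exact_mod_cast (ENNReal.pow_rpow_inv_natCast two_ne_zero _).symm
  have holder := ENNReal.lintegral_mul_norm_pow_le (g := fun a => w a * h a ^ 2) hw
    (hw.mul (hh.pow_const 2)) (by norm_num : (0 : ℝ) ≤ 2⁻¹) (by norm_num : (0 : ℝ) ≤ 2⁻¹)
    (by norm_num)
  calc (∫⁻ a, w a * h a ∂μ) ^ 2
      = (∫⁻ a, w a ^ (2⁻¹ : ℝ) * (w a * h a ^ 2) ^ (2⁻¹ : ℝ) ∂μ) ^ 2 := by
        rw [lintegral_congr hsqrt]
    _ ≤ ((∫⁻ a, w a ∂μ) ^ (2⁻¹ : ℝ) * (∫⁻ a, w a * h a ^ 2 ∂μ) ^ (2⁻¹ : ℝ)) ^ 2 :=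
        pow_le_pow_left' holder 2
    _ ≤ ((∫⁻ a, w a * h a ^ 2 ∂μ) ^ (2⁻¹ : ℝ)) ^ 2 := by
        gcongr
        exact mul_le_of_le_one_left zero_le (ENNReal.rpow_le_one hw_one (by norm_num))
    _ = ∫⁻ a, w a * h a ^ 2 ∂μ := by
        exact_mod_cast ENNReal.rpow_inv_natCast_pow two_ne_zero _

section Pointwise

variable {E : Type*} [NormedAddCommGroup E] [NormedSpace ℝ E]

theorem enorm_intervalIntegral_exp_sub_smul_sq_le {f : ℝ → E} {a s : ℝ} (has : a ≤ s)
    (hf : AEStronglyMeasurable f (volume.restrict (Ioc a s))) :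
    ‖∫ τ in a..s, exp (τ - s) • f τ‖ₑ ^ 2
      ≤ ∫⁻ τ in Ioc a s, ENNReal.ofReal (exp (τ - s)) * ‖f τ‖ₑ ^ 2 := by
  have hkernel : Measurable fun τ => ENNReal.ofReal (exp (τ - s)) := by fun_prop
  have hmass : ∫⁻ τ in Ioc a s, ENNReal.ofReal (exp (τ - s)) ≤ 1 :=
    (lintegral_mono_set Ioc_subset_Iic_self).trans (lintegral_exp_sub_Iic s).le
  calc ‖∫ τ in a..s, exp (τ - s) • f τ‖ₑ ^ 2
      ≤ (∫⁻ τ in Ioc a s, ENNReal.ofReal (exp (τ - s)) * ‖f τ‖ₑ) ^ 2 := by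
        rw [intervalIntegral.integral_of_le has]
        gcongr
        refine (enorm_integral_le_lintegral_enorm _).trans_eq (lintegral_congr fun τ => ?_)
        rw [enorm_smul, Real.enorm_eq_ofReal (exp_pos _).le]
    _ ≤ ∫⁻ τ in Ioc a s, ENNReal.ofReal (exp (τ - s)) * ‖f τ‖ₑ ^ 2 :=
        ENNReal.lintegral_mul_sq_le hkernel.aemeasurable hf.enorm hmass

theorem ofReal_mul_norm_intervalIntegral_exp_sub_smul_sq_le {g : ℝ → ℝ} {f : ℝ → E} {a s : ℝ}
    (has : a ≤ s) (hg : AntitoneOn g (Icc a s))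
    (hf : AEStronglyMeasurable f (volume.restrict (Ioc a s))) :
    ENNReal.ofReal (g s * ‖∫ τ in a..s, exp (τ - s) • f τ‖ ^ 2)
      ≤ ∫⁻ τ in Ioc a s, ENNReal.ofReal (exp (τ - s)) * ENNReal.ofReal (g τ * ‖f τ‖ ^ 2) := by
  simp only [ENNReal.ofReal_mul' (sq_nonneg _), ENNReal.ofReal_pow (norm_nonneg _), ofReal_norm]
  calc ENNReal.ofReal (g s) * ‖∫ τ in a..s, exp (τ - s) • f τ‖ₑ ^ 2
      ≤ ENNReal.ofReal (g s) * ∫⁻ τ in Ioc a s, ENNReal.ofReal (exp (τ - s)) * ‖f τ‖ₑ ^ 2 := by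
        gcongr
        exact enorm_intervalIntegral_exp_sub_smul_sq_le has hf
    _ = ∫⁻ τ in Ioc a s, ENNReal.ofReal (exp (τ - s)) * (ENNReal.ofReal (g s) * ‖f τ‖ₑ ^ 2) := by
        rw [← lintegral_const_mul' _ _ ENNReal.ofReal_ne_top]
        simp only [mul_left_comm]
    _ ≤ ∫⁻ τ in Ioc a s, ENNReal.ofReal (exp (τ - s)) * (ENNReal.ofReal (g τ) * ‖f τ‖ₑ ^ 2) := by
        refine setLIntegral_mono' measurableSet_Ioc fun τ hτ => ?_
        gcongr
        exact hg (Ioc_subset_Icc_self hτ) (right_mem_Icc.2 has) hτ.2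

end Pointwise

theorem lintegral_Ioi_lintegral_Ioc_exp_sub_mul_of_measurable {a : ℝ} {k : ℝ → ℝ≥0∞}
    (hk : Measurable k) :
    ∫⁻ s in Ioi a, ∫⁻ τ in Ioc a s, ENNReal.ofReal (exp (τ - s)) * k τ = ∫⁻ τ in Ioi a, k τ := by
  set K : ℝ → ℝ → ℝ≥0∞ := fun s τ => if τ ≤ s then ENNReal.ofReal (exp (τ - s)) * k τ else 0
  have hK : Measurable (Function.uncurry K) :=
    Measurable.ite (measurableSet_le measurable_snd measurable_fst) (by fun_prop) measurable_const
  have hinner : ∀ s, ∫⁻ τ in Ioc a s, ENNReal.ofReal (exp (τ - s)) * k τ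
      = ∫⁻ τ in Ioi a, K s τ := fun s => by
    rw [← Iic_inter_Ioi, ← Measure.restrict_restrict measurableSet_Iic,
      ← lintegral_indicator measurableSet_Iic]
    rfl
  have houter : ∀ τ ∈ Ioi a, ∫⁻ s in Ioi a, K s τ = k τ := fun τ hτ => by
    have hτs : ∀ s, K s τ = (Ici τ).indicator (fun s => ENNReal.ofReal (exp (τ - s)) * k τ) s :=
      fun s => rfl
    rw [lintegral_congr hτs, lintegral_indicator measurableSet_Ici,
      Measure.restrict_restrict measurableSet_Ici,
      inter_eq_self_of_subset_left (Ici_subset_Ioi.2 hτ),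
      lintegral_mul_const _ (by fun_prop), lintegral_exp_sub_Ici, one_mul]
  simp_rw [hinner]
  rw [lintegral_lintegral_swap hK.aemeasurable]
  exact setLIntegral_congr_fun measurableSet_Ioi houter

theorem lintegral_Ioi_lintegral_Ioc_exp_sub_mul {a : ℝ} {k : ℝ → ℝ≥0∞}
    (hk : AEMeasurable k (volume.restrict (Ioi a))) :
    ∫⁻ s in Ioi a, ∫⁻ τ in Ioc a s, ENNReal.ofReal (exp (τ - s)) * k τ = ∫⁻ τ in Ioi a, k τ := by
  have hk_Ioc : ∀ s, k =ᵐ[volume.restrict (Ioc a s)] hk.mk k := fun s =>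
    ae_restrict_of_ae_restrict_of_subset Ioc_subset_Ioi_self hk.ae_eq_mk
  calc ∫⁻ s in Ioi a, ∫⁻ τ in Ioc a s, ENNReal.ofReal (exp (τ - s)) * k τ
      = ∫⁻ s in Ioi a, ∫⁻ τ in Ioc a s, ENNReal.ofReal (exp (τ - s)) * hk.mk k τ :=
        lintegral_congr fun s => lintegral_congr_ae <| (hk_Ioc s).mono fun τ hτ => by simp only [hτ]
    _ = ∫⁻ τ in Ioi a, hk.mk k τ :=
        lintegral_Ioi_lintegral_Ioc_exp_sub_mul_of_measurable hk.measurable_mk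
    _ = ∫⁻ τ in Ioi a, k τ := lintegral_congr_ae hk.ae_eq_mk.symm

theorem MeasureTheory.integral_le_of_lintegral_ofReal_le {α : Type*} [MeasurableSpace α]
    {μ : Measure α} {φ : α → ℝ} {c : ℝ} (hφ : 0 ≤ᵐ[μ] φ) (hc : 0 ≤ c)
    (h : ∫⁻ a, ENNReal.ofReal (φ a) ∂μ ≤ ENNReal.ofReal c) :
    ∫ a, φ a ∂μ ≤ c := by
  have hnorm : ∫⁻ a, ENNReal.ofReal ‖φ a‖ ∂μ = ∫⁻ a, ENNReal.ofReal (φ a) ∂μ :=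
    lintegral_congr_ae <| hφ.mono fun a ha => by dsimp only; rw [Real.norm_of_nonneg ha]
  calc ∫ a, φ a ∂μ ≤ ‖∫ a, φ a ∂μ‖ := Real.le_norm_self _
    _ ≤ (∫⁻ a, ENNReal.ofReal ‖φ a‖ ∂μ).toReal := norm_integral_le_lintegral_norm _
    _ ≤ (ENNReal.ofReal c).toReal := by
        rw [hnorm]; exact ENNReal.toReal_mono ENNReal.ofReal_ne_top h
    _ = c := ENNReal.toReal_ofReal hc

theorem stmt0_general {H : Type*} [NormedAddCommGroup H] [InnerProductSpace ℝ H]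
    (g : ℝ → ℝ) (f : ℝ → H)
    (hg_nonneg : ∀ s, 0 ≤ s → 0 ≤ g s)
    (hg_mono : AntitoneOn g (Ici 0))
    (hf_meas : AEStronglyMeasurable f (volume.restrict (Ici 0)))
    (hfin : IntegrableOn (fun τ => g τ * ‖f τ‖ ^ 2) (Ioi 0)) :
    ∫ s in Ioi (0:ℝ), g s * ‖∫ τ in (0:ℝ)..s, Real.exp (τ - s) • f τ‖ ^ 2
      ≤ ∫ τ in Ioi (0:ℝ), g τ * ‖f τ‖ ^ 2 := by
  have hnonneg : ∀ φ : ℝ → ℝ, 0 ≤ᵐ[volume.restrict (Ioi 0)] fun s => g s * φ s ^ 2 := fun φ =>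
    (ae_restrict_iff' measurableSet_Ioi).2 <| .of_forall fun s hs =>
      mul_nonneg (hg_nonneg s (le_of_lt hs)) (sq_nonneg _)
  refine integral_le_of_lintegral_ofReal_le (hnonneg _)
    (integral_nonneg_of_ae (hnonneg fun τ => ‖f τ‖)) ?_
  calc ∫⁻ s in Ioi 0, ENNReal.ofReal (g s * ‖∫ τ in (0:ℝ)..s, Real.exp (τ - s) • f τ‖ ^ 2)
      ≤ ∫⁻ s in Ioi 0, ∫⁻ τ in Ioc 0 s,
          ENNReal.ofReal (Real.exp (τ - s)) * ENNReal.ofReal (g τ * ‖f τ‖ ^ 2) :=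
        setLIntegral_mono' measurableSet_Ioi fun s hs =>
          ofReal_mul_norm_intervalIntegral_exp_sub_smul_sq_le (le_of_lt hs)
            (hg_mono.mono Icc_subset_Ici_self)
            (hf_meas.mono_measure (Measure.restrict_mono
              (Ioc_subset_Icc_self.trans Icc_subset_Ici_self) le_rfl))
    _ = ∫⁻ τ in Ioi 0, ENNReal.ofReal (g τ * ‖f τ‖ ^ 2) :=
        lintegral_Ioi_lintegral_Ioc_exp_sub_mul hfin.aemeasurable.ennreal_ofReal
    _ = ENNReal.ofReal (∫ τ in Ioi 0, g τ * ‖f τ‖ ^ 2) :=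
        (ofReal_integral_eq_lintegral_ofReal hfin (hnonneg _)).symm

/-- The key weighted estimate used in the surjectivity part of the well-posedness proof:
for a nonincreasing nonnegative weight `g` on `[0,∞)` and a locally integrable `f` with
`∫₀^∞ g τ ‖f τ‖² dτ < ∞`, one has
`∫₀^∞ g s ‖∫₀^s e^{τ-s} f τ dτ‖² ds ≤ ∫₀^∞ g τ ‖f τ‖² dτ`. -/
theorem stmt0 {H : Type*} [NormedAddCommGroup H] [InnerProductSpace ℝ H] [CompleteSpace H]
    (g : ℝ → ℝ) (f : ℝ → H)
    (hg_nonneg : ∀ s, 0 ≤ s → 0 ≤ g s)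
    (hg_mono : AntitoneOn g (Ici 0))
    (hf_meas : AEStronglyMeasurable f (volume.restrict (Ici 0)))
    (hf_loc : LocallyIntegrableOn f (Ici 0))
    (hfin : IntegrableOn (fun τ => g τ * ‖f τ‖ ^ 2) (Ioi 0)) :
    ∫ s in Ioi (0:ℝ), g s * ‖∫ τ in (0:ℝ)..s, Real.exp (τ - s) • f τ‖ ^ 2
      ≤ ∫ τ in Ioi (0:ℝ), g τ * ‖f τ‖ ^ 2 :=
  stmt0_general g f hg_nonneg hg_mono hf_meas hfin
end

section
/- Let G : [0,∞) → [0,∞) be increasing, strictly convex, of class C¹ on [0,∞) and C² on (0,∞), with G(0) = G'(0) = 0 and G'(t) → ∞ as t → ∞, so that G' is an increasing bijection of [0,∞). Let g : [0,∞) → [0,∞) be differentiable and nonincreasing with g'(s) < 0 for all s ≥ 0, and assume m₁ := sup_{s ≥ 0} g(s)/G⁻¹(−g'(s)) < ∞. Let w, M : [0,∞) → [0,∞) be measurable with w(s) ≤ M(s) for all s ≥ 0, and assume m₂ := ∫₀^∞ M(s) g(s)/G⁻¹(−g'(s)) ds < ∞. Then for every θ > 0, ∫₀^∞ g(s) w(s)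 ds ≤ (m₁ / G'(θ)) ∫₀^∞ (−g'(s)) w(s) ds + θ · m₂. -/
/-!
The tangent line of the convex function `G` at `θ` gives the Young-type bound
`x ≤ θ + G(x) / G'(θ)` for every `x ≥ 0`. At each `s`, take `x = G⁻¹(-g'(s))` and write
`g(s) = (g(s)/x) · x`; since `g(s)/x ≤ m₁`, this gives
`g(s) ≤ (m₁ / G'(θ)) (-g'(s)) + θ g(s)/x`. Multiplying by `0 ≤ w ≤ M` and integrating
proves the claim.
-/

open MeasureTheory Set Filter

theorem ConvexOn.add_deriv_mul_sub_le {S : Set ℝ} {f : ℝ → ℝ} {x y : ℝ} (hf : ConvexOn ℝ S f)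
    (hx : x ∈ S) (hy : y ∈ S) (hfd : DifferentiableAt ℝ f y) :
    f y + deriv f y * (x - y) ≤ f x := by
  rcases lt_trichotomy x y with hxy | rfl | hxy
  · have h := hf.slope_le_deriv hx hy hxy hfd
    rw [slope_def_field, div_le_iff₀ (sub_pos.2 hxy)] at h
    linarith
  · simp
  · have h := hf.deriv_le_slope hy hx hxy hfd
    rw [slope_def_field, le_div_iff₀ (sub_pos.2 hxy)] at h
    linarith

theorem ConvexOn.le_add_div_deriv {S : Set ℝ} {G : ℝ → ℝ} {x θ : ℝ} (hG : ConvexOn ℝ S G)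
    (hx : x ∈ S) (hθ : θ ∈ S) (hGd : DifferentiableAt ℝ G θ) (hGθ : 0 ≤ G θ)
    (hG'θ : 0 < deriv G θ) :
    x ≤ θ + G x / deriv G θ := by
  have := hG.add_deriv_mul_sub_le hx hθ hGd
  rw [← sub_le_iff_le_add', le_div_iff₀ hG'θ]
  linarith

theorem mul_le_of_le_add_div {a b c x θ m w M : ℝ} (ha : 0 ≤ a) (hx : 0 < x) (hb : 0 ≤ b)
    (hc : 0 < c) (hθ : 0 ≤ θ) (hxb : x ≤ θ + b / c) (ham : a / x ≤ m) (hw : 0 ≤ w)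
    (hwM : w ≤ M) :
    a * w ≤ m / c * (b * w) + θ * (M * (a / x)) := by
  have hr : 0 ≤ a / x := div_nonneg ha hx.le
  have hpt : a ≤ m / c * b + θ * (a / x) :=
    calc a = a / x * x := (div_mul_cancel₀ a hx.ne').symm
      _ ≤ a / x * (θ + b / c) := mul_le_mul_of_nonneg_left hxb hr
      _ = θ * (a / x) + a / x * (b / c) := by ring
      _ ≤ θ * (a / x) + m * (b / c) := by gcongr
      _ = m / c * b + θ * (a / x) := by ring
  calc a * w ≤ (m / c * b + θ * (a / x)) * w := mul_le_mul_of_nonneg_right hpt hw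
    _ = m / c * (b * w) + θ * (w * (a / x)) := by ring
    _ ≤ m / c * (b * w) + θ * (M * (a / x)) := by gcongr

theorem stmt8_general (G Ginv g w M : ℝ → ℝ)
    (hG_maps : ∀ s, 0 ≤ s → 0 ≤ G s)
    (hG_conv : StrictConvexOn ℝ (Ici 0) G)
    (hG_c2 : ContDiffOn ℝ 2 G (Ioi 0))
    (hG0 : G 0 = 0) (hG'0 : deriv G 0 = 0)
    (hG'_mono : StrictMonoOn (deriv G) (Ici 0))
    (hGinv_maps : ∀ s, 0 ≤ s → 0 ≤ Ginv s)
    (hGinv_left : ∀ s, 0 ≤ s → G (Ginv s) = s)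
    (hg_nonneg : ∀ s, 0 ≤ s → 0 ≤ g s)
    (hg'_neg : ∀ s, 0 ≤ s → deriv g s < 0)
    (hm₁ : BddAbove ((fun s => g s / Ginv (-(deriv g s))) '' Ici 0))
    (hw_nonneg : ∀ s, 0 ≤ s → 0 ≤ w s)
    (hwM : ∀ s, 0 ≤ s → w s ≤ M s)
    (hm₂ : IntegrableOn (fun s => M s * (g s / Ginv (-(deriv g s)))) (Ioi 0))
    (hgw : IntegrableOn (fun s => g s * w s) (Ioi 0))
    (hg'w : IntegrableOn (fun s => -(deriv g s) * w s) (Ioi 0)) :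
    ∀ θ : ℝ, 0 < θ →
      ∫ s in Ioi (0:ℝ), g s * w s
        ≤ (sSup ((fun s => g s / Ginv (-(deriv g s))) '' Ici 0) / deriv G θ)
            * (∫ s in Ioi (0:ℝ), -(deriv g s) * w s)
          + θ * ∫ s in Ioi (0:ℝ), M s * (g s / Ginv (-(deriv g s))) := by
  intro θ hθ
  set m₁ := sSup ((fun s => g s / Ginv (-(deriv g s))) '' Ici 0)
  have hG'θ : 0 < deriv G θ := hG'0 ▸ hG'_mono self_mem_Ici hθ.le hθ
  have hGd : DifferentiableAt ℝ G θ :=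
    (hG_c2.differentiableOn two_ne_zero).differentiableAt (Ioi_mem_nhds hθ)
  have hpt : ∀ s ∈ Ioi (0:ℝ), g s * w s ≤
      m₁ / deriv G θ * (-(deriv g s) * w s) + θ * (M s * (g s / Ginv (-(deriv g s)))) := by
    intro s (hs : 0 < s)
    have hb : 0 < -(deriv g s) := neg_pos.2 (hg'_neg s hs.le)
    have hGx := hGinv_left _ hb.le
    have hx : 0 < Ginv (-(deriv g s)) :=
      (hGinv_maps _ hb.le).lt_of_ne fun h => by rw [← h, hG0] at hGx; exact hb.ne hGx
    refine mul_le_of_le_add_div (hg_nonneg s hs.le) hx hb.le hG'θ hθ.le ?_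
      (le_csSup hm₁ ⟨s, hs.le, rfl⟩) (hw_nonneg s hs.le) (hwM s hs.le)
    simpa only [hGx] using
      hG_conv.convexOn.le_add_div_deriv hx.le hθ.le hGd (hG_maps θ hθ.le) hG'θ
  calc ∫ s in Ioi (0:ℝ), g s * w s
      ≤ ∫ s in Ioi (0:ℝ), (m₁ / deriv G θ * (-(deriv g s) * w s)
          + θ * (M s * (g s / Ginv (-(deriv g s))))) :=
        setIntegral_mono_on hgw ((hg'w.const_mul _).add (hm₂.const_mul _)) measurableSet_Ioi hpt
    _ = _ := by
        rw [integral_add (hg'w.const_mul _) (hm₂.const_mul _), integral_const_mul,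
          integral_const_mul]

/-- The abstract core of Lemma 3.5 of the paper: for `G` as in (H2) with inverse `Ginv`,
a differentiable nonincreasing kernel `g` with `g' < 0`,
`m₁ := sup_{s ≥ 0} g(s)/G⁻¹(−g'(s)) < ∞` and
`m₂ := ∫₀^∞ M(s) g(s)/G⁻¹(−g'(s)) ds < ∞`, and measurable `0 ≤ w ≤ M`, one has for any
`θ > 0`:
`∫₀^∞ g(s) w(s) ds ≤ (m₁/G'(θ)) ∫₀^∞ (−g'(s)) w(s) ds + θ m₂`. -/
theorem stmt8 (G Ginv g w M : ℝ → ℝ)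
    (hG_maps : ∀ s, 0 ≤ s → 0 ≤ G s)
    (hG_mono : StrictMonoOn G (Ici 0))
    (hG_conv : StrictConvexOn ℝ (Ici 0) G)
    (hG_c1 : ContDiffOn ℝ 1 G (Ici 0))
    (hG_c2 : ContDiffOn ℝ 2 G (Ioi 0))
    (hG0 : G 0 = 0) (hG'0 : deriv G 0 = 0)
    (hG'top : Tendsto (deriv G) atTop atTop)
    (hG'_mono : StrictMonoOn (deriv G) (Ici 0))
    (hGinv_maps : ∀ s, 0 ≤ s → 0 ≤ Ginv s)
    (hGinv_left : ∀ s, 0 ≤ s → G (Ginv s) = s)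
    (hGinv_right : ∀ s, 0 ≤ s → Ginv (G s) = s)
    (hg_nonneg : ∀ s, 0 ≤ s → 0 ≤ g s)
    (hg_diff : Differentiable ℝ g)
    (hg_mono : AntitoneOn g (Ici 0))
    (hg'_neg : ∀ s, 0 ≤ s → deriv g s < 0)
    (hm₁ : BddAbove ((fun s => g s / Ginv (-(deriv g s))) '' Ici 0))
    (hw_meas : Measurable w) (hM_meas : Measurable M)
    (hw_nonneg : ∀ s, 0 ≤ s → 0 ≤ w s)
    (hM_nonneg : ∀ s, 0 ≤ s → 0 ≤ M s)
    (hwM : ∀ s, 0 ≤ s → w s ≤ M s)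
    (hm₂ : IntegrableOn (fun s => M s * (g s / Ginv (-(deriv g s)))) (Ioi 0))
    (hgw : IntegrableOn (fun s => g s * w s) (Ioi 0))
    (hg'w : IntegrableOn (fun s => -(deriv g s) * w s) (Ioi 0)) :
    ∀ θ : ℝ, 0 < θ →
      ∫ s in Ioi (0:ℝ), g s * w s
        ≤ (sSup ((fun s => g s / Ginv (-(deriv g s))) '' Ici 0) / deriv G θ)
            * (∫ s in Ioi (0:ℝ), -(deriv g s) * w s)
          + θ * ∫ s in Ioi (0:ℝ), M s * (g s / Ginv (-(deriv g s))) :=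
  stmt8_general G Ginv g w M hG_maps hG_conv hG_c2 hG0 hG'0 hG'_mono hGinv_maps hGinv_left hg_nonneg
    hg'_neg hm₁ hw_nonneg hwM hm₂ hgw hg'w
end

section
/- Let H be a real inner product space, let (aⁿ)_{n∈ℤ} be a family of elements of H, let (cʲ)_{j≥1} be real numbers, let N ≥ 1 and n ∈ ℤ, and set z^{m,j} := a^m − a^{m−j} for m ∈ ℤ, j ≥ 0. Then Σ_{j=1}^N cʲ ⟨a^{n+1−j}, a^{n+1} − aⁿ⟩ = (1/2)(Σ_{j=1}^N cʲ)(‖a^{n+1}‖² − ‖aⁿ‖²) − (1/2) Σ_{j=1}^N cʲ (‖z^{n+1,j}‖² − ‖z^{n,j}‖²) + (1/2) Σ_{j=1}^N (c^{j+1} − cʲ) ‖z^{n,j}‖² − (1/2) c^{N+1} ‖z^{n,N}‖². -/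
/-!
Polarization writes `⟨a^{n+1-j}, a^{n+1} - aⁿ⟩` as
`½(‖a^{n+1}‖² - ‖aⁿ‖²) - ½(‖z^{n+1,j}‖² - ‖z^{n,j-1}‖²)`. Shifting the index of the sum of the
`cʲ‖z^{n,j-1}‖²` by one, using `z^{n,0} = 0`, produces the weights `c^{j+1} - cʲ` and the
boundary term `c^{N+1}‖z^{n,N}‖²`.
-/

open Finset

theorem real_inner_sub_right_eq_half_norm_sq_sub {H : Type*} [NormedAddCommGroup H]
    [InnerProductSpace ℝ H] (x u v : H) :
    inner ℝ x (u - v) = (1 / 2) * (‖u‖ ^ 2 - ‖v‖ ^ 2) - (1 / 2) * (‖u - x‖ ^ 2 - ‖v - x‖ ^ 2) := by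
  rw [inner_sub_right, norm_sub_sq_real, norm_sub_sq_real, real_inner_comm x u,
    real_inner_comm x v]
  ring

theorem sum_Icc_mul_pred_eq_sum_Icc_mul_succ_sub {R : Type*} [Ring R] (c f : ℕ → R)
    (hf : f 0 = 0) (N : ℕ) :
    ∑ j ∈ Icc 1 N, c j * f (j - 1) = ∑ j ∈ Icc 1 N, c (j + 1) * f j - c (N + 1) * f N := by
  induction N with
  | zero => simp [hf]
  | succ N ih =>
    rw [sum_Icc_succ_top (by omega), sum_Icc_succ_top (by omega), ih, Nat.add_sub_cancel]
    abel

theorem stmt12_general {H : Type*} [NormedAddCommGroup H] [InnerProductSpace ℝ H]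
    (a : ℤ → H) (c : ℕ → ℝ) (N : ℕ) (n : ℤ)
    (z : ℤ → ℕ → H) (hz : ∀ m : ℤ, ∀ j : ℕ, z m j = a m - a (m - j)) :
    ∑ j ∈ Finset.Icc 1 N, c j * (inner ℝ (a (n + 1 - j)) (a (n + 1) - a n) : ℝ)
      = (1 / 2) * (∑ j ∈ Finset.Icc 1 N, c j) * (‖a (n + 1)‖ ^ 2 - ‖a n‖ ^ 2)
        - (1 / 2) * ∑ j ∈ Finset.Icc 1 N,
            c j * (‖z (n + 1) j‖ ^ 2 - ‖z n j‖ ^ 2)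
        + (1 / 2) * ∑ j ∈ Finset.Icc 1 N, (c (j + 1) - c j) * ‖z n j‖ ^ 2
        - (1 / 2) * c (N + 1) * ‖z n N‖ ^ 2 := by
  have hterm : ∀ j ∈ Icc 1 N, c j * inner ℝ (a (n + 1 - j)) (a (n + 1) - a n)
      = (1 / 2) * (c j * (‖a (n + 1)‖ ^ 2 - ‖a n‖ ^ 2)) - (1 / 2) * (c j * ‖z (n + 1) j‖ ^ 2)
        + (1 / 2) * (c j * ‖z n (j - 1)‖ ^ 2) := by
    intro j hj
    have hcast : ((j - 1 : ℕ) : ℤ) = j - 1 := by push_cast [(mem_Icc.mp hj).1]; ring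
    rw [real_inner_sub_right_eq_half_norm_sq_sub, hz, hz, hcast,
      show n - (j - 1 : ℤ) = n + 1 - j by ring]
    ring
  have hshift := sum_Icc_mul_pred_eq_sum_Icc_mul_succ_sub c (fun j ↦ ‖z n j‖ ^ 2)
    (by simp [hz]) N
  rw [sum_congr rfl hterm, sum_add_distrib, sum_sub_distrib, ← mul_sum, ← mul_sum, ← mul_sum,
    ← sum_mul]
  simp only [mul_sub, sub_mul, sum_sub_distrib]
  linear_combination (1 / 2) * hshift

/-- The abstract summation-by-parts identity underlying Lemma 4.1 of the paper,
with `z^{m,j} = a^m − a^{m−j}`: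
`Σ_{j=1}^N cʲ ⟨a^{n+1−j}, a^{n+1} − aⁿ⟩
  = ½(Σ cʲ)(‖a^{n+1}‖² − ‖aⁿ‖²) − ½ Σ cʲ(‖z^{n+1,j}‖² − ‖z^{n,j}‖²)
    + ½ Σ (c^{j+1} − cʲ)‖z^{n,j}‖² − ½ c^{N+1}‖z^{n,N}‖²`. -/
theorem stmt12 {H : Type*} [NormedAddCommGroup H] [InnerProductSpace ℝ H]
    (a : ℤ → H) (c : ℕ → ℝ) (N : ℕ) (hN : 1 ≤ N) (n : ℤ)
    (z : ℤ → ℕ → H) (hz : ∀ m : ℤ, ∀ j : ℕ, z m j = a m - a (m - j)) :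
    ∑ j ∈ Finset.Icc 1 N, c j * (inner ℝ (a (n + 1 - j)) (a (n + 1) - a n) : ℝ)
      = (1 / 2) * (∑ j ∈ Finset.Icc 1 N, c j) * (‖a (n + 1)‖ ^ 2 - ‖a n‖ ^ 2)
        - (1 / 2) * ∑ j ∈ Finset.Icc 1 N,
            c j * (‖z (n + 1) j‖ ^ 2 - ‖z n j‖ ^ 2)
        + (1 / 2) * ∑ j ∈ Finset.Icc 1 N, (c (j + 1) - c j) * ‖z n j‖ ^ 2
        - (1 / 2) * c (N + 1) * ‖z n N‖ ^ 2 :=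
  stmt12_general a c N n z hz
end
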